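/- On a chain of L qubits, the operator Ψ(y) = Σ_{s=0}^{⌊(L−1)/2⌋} (−y)^s Z_{2s+1} Π_{j=1}^{2s} X_j commutes with Z₁Z₂ and with every term y Y_j Y_{j+1} + Z_{j+1} Z_{j+2} for 1 ≤ j ≤ L−2. -/

import Mathlib

open Matrix

/-- Pauli X matrix. -/
noncomputable def PX : Matrix (Fin 2) (Fin 2) ℂ := !![0, 1; 1, 0]

/-- Pauli Y matrix. -/
noncomputable def PY : Matrix (Fin 2) (Fin 2) ℂ := !![0, -Complex.I; Complex.I, 0]

/-- Pauli Z matrix. -/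
noncomputable def PZ : Matrix (Fin 2) (Fin 2) ℂ := !![1, 0; 0, -1]

/-- Tensor product of one-qubit operators `f i` across a chain of `L` qubits,
as a matrix on `(ℂ²)^{⊗L}` (indexed by `Fin L → Fin 2`). -/
noncomputable def prodOp (L : ℕ) (f : Fin L → Matrix (Fin 2) (Fin 2) ℂ) :
    Matrix (Fin L → Fin 2) (Fin L → Fin 2) ℂ :=
  Matrix.of fun a b => ∏ i, f i (a i) (b i)

/-- A single-site operator `M` acting on site `j` of a chain of `L` qubits. -/
noncomputable def onSite (L : ℕ) (M : Matrix (Fin 2) (Fin 2) ℂ) (j : Fin L) :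
    Matrix (Fin L → Fin 2) (Fin L → Fin 2) ℂ :=
  prodOp L (fun i => if i = j then M else 1)


/-- The YZ limit of the Fendley strong zero mode,
`Ψ(y) = Σ_{s=0}^{⌊(L-1)/2⌋} (-y)^s Z_{2s+1} Π_{j=1}^{2s} X_j`
(sites written in 0-indexed form: `X` on sites `< 2s`, `Z` on site `2s`). -/
noncomputable def yzSZM (L : ℕ) (y : ℝ) :
    Matrix (Fin L → Fin 2) (Fin L → Fin 2) ℂ :=
  ∑ s ∈ Finset.range ((L + 1) / 2), (-(y : ℂ)) ^ s •
    prodOp L (fun i => if (i : ℕ) = 2 * s then PZ else if (i : ℕ) < 2 * s then PX else 1)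

/-!
`Ψ(y)` is a linear combination of the Pauli strings `Ψ_s = X_0 ⋯ X_{2s-1} Z_{2s}`, and two Pauli
strings commute or anticommute according to the parity of the number of sites at which their
factors anticommute. Counting such sites, `Z_0 Z_1` commutes with every `Ψ_s`, and so does the bond
term `y Y_j Y_{j+1} + Z_{j+1} Z_{j+2}`, except when `j = 2t`: then `Ψ_t` anticommutes with
`Y_{2t} Y_{2t+1}` and `Ψ_{t+1}` with `Z_{2t+1} Z_{2t+2}`. Since
`Ψ_t Y_{2t} Y_{2t+1} = Ψ_{t+1} Z_{2t+1} Z_{2t+2}` and consecutive coefficients of `Ψ(y)` differ by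
the factor `-y`, the two commutators cancel.
-/

open Finset

lemma PX_mul_PY : PX * PY = -(PY * PX) := by
  ext i j; fin_cases i <;> fin_cases j <;> simp [PX, PY]

lemma PX_mul_PZ : PX * PZ = -(PZ * PX) := by
  ext i j; fin_cases i <;> fin_cases j <;> simp [PX, PZ]

lemma PZ_mul_PY : PZ * PY = -(PY * PZ) := by
  ext i j; fin_cases i <;> fin_cases j <;> simp [PY, PZ]

lemma PZ_mul_PY_eq_smul_PX : PZ * PY = -Complex.I • PX := by
  ext i j; fin_cases i <;> fin_cases j <;> simp [PX, PY, PZ]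

lemma PX_mul_PZ_eq_smul_PY : PX * PZ = -Complex.I • PY := by
  ext i j; fin_cases i <;> fin_cases j <;> simp [PX, PY, PZ]

lemma PZ_mul_PZ : PZ * PZ = 1 := by
  ext i j; fin_cases i <;> fin_cases j <;> simp [PZ]

section prodOp

variable {L : ℕ}

lemma prodOp_mul (f g : Fin L → Matrix (Fin 2) (Fin 2) ℂ) :
    prodOp L f * prodOp L g = prodOp L (fun i => f i * g i) := by
  ext a b
  simp only [prodOp, Matrix.mul_apply, Matrix.of_apply]
  rw [prod_univ_sum, Fintype.piFinset_univ]
  simp_rw [prod_mul_distrib]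

lemma prodOp_smul (c : Fin L → ℂ) (f : Fin L → Matrix (Fin 2) (Fin 2) ℂ) :
    prodOp L (fun i => c i • f i) = (∏ i, c i) • prodOp L f := by
  ext a b
  simp [prodOp, prod_mul_distrib]

lemma prodOp_mul_prodOp_eq_neg_one_pow (S : Finset (Fin L))
    {f g : Fin L → Matrix (Fin 2) (Fin 2) ℂ}
    (h : ∀ i, f i * g i = if i ∈ S then -(g i * f i) else g i * f i) :
    prodOp L f * prodOp L g = (-1 : ℂ) ^ #S • (prodOp L g * prodOp L f) := by
  have hsign : ∀ i, f i * g i = (if i ∈ S then -1 else 1 : ℂ) • (g i * f i) := fun i => by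
    rw [h i]; split_ifs <;> simp
  simp only [prodOp_mul, hsign, prodOp_smul, prod_ite_mem, prod_const,
    univ_inter]

lemma commute_prodOp_of_even (S : Finset (Fin L)) {f g : Fin L → Matrix (Fin 2) (Fin 2) ℂ}
    (h : ∀ i, f i * g i = if i ∈ S then -(g i * f i) else g i * f i) (hS : Even #S) :
    Commute (prodOp L f) (prodOp L g) := by
  rw [Commute, SemiconjBy, prodOp_mul_prodOp_eq_neg_one_pow S h, hS.neg_one_pow, one_smul]

lemma prodOp_mul_prodOp_of_odd (S : Finset (Fin L)) {f g : Fin L → Matrix (Fin 2) (Fin 2) ℂ}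
    (h : ∀ i, f i * g i = if i ∈ S then -(g i * f i) else g i * f i) (hS : Odd #S) :
    prodOp L f * prodOp L g = -(prodOp L g * prodOp L f) := by
  rw [prodOp_mul_prodOp_eq_neg_one_pow S h, hS.neg_one_pow, neg_one_smul]

end prodOp

noncomputable def psiTerm (L s : ℕ) : Matrix (Fin L → Fin 2) (Fin L → Fin 2) ℂ :=
  prodOp L (fun i => if (i : ℕ) = 2 * s then PZ else if (i : ℕ) < 2 * s then PX else 1)

noncomputable def bondOp (L : ℕ) (M : Matrix (Fin 2) (Fin 2) ℂ) (k : ℕ) :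
    Matrix (Fin L → Fin 2) (Fin L → Fin 2) ℂ :=
  prodOp L (fun i => if (i : ℕ) = k ∨ (i : ℕ) = k + 1 then M else 1)

section chain

variable {L : ℕ}

lemma onSite_mul_onSite_succ (M : Matrix (Fin 2) (Fin 2) ℂ) (k : ℕ) (hk : k + 1 < L) :
    onSite L M ⟨k, by omega⟩ * onSite L M ⟨k + 1, hk⟩ = bondOp L M k := by
  rw [onSite, onSite, prodOp_mul, bondOp]
  congr 1; funext i
  simp only [Fin.ext_iff]
  split_ifs <;> first | omega | simp

lemma psiTerm_commute_bondOp_PY {k s : ℕ} (hk : k + 1 < L) (hs : 2 * s ≠ k) :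
    Commute (psiTerm L s) (bondOp L PY k) := by
  rcases hs.lt_or_gt with h | h
  · refine commute_prodOp_of_even ∅ (fun i => ?_) (by simp)
    simp only [notMem_empty, if_false]
    split_ifs <;> first | omega | simp
  · refine commute_prodOp_of_even {⟨k, by omega⟩, ⟨k + 1, hk⟩} (fun i => ?_)
      (by rw [card_pair (by simp [Fin.ext_iff])]; exact even_two)
    simp only [mem_insert, mem_singleton, Fin.ext_iff]
    split_ifs <;> first | omega | simp [PX_mul_PY, PZ_mul_PY]

lemma psiTerm_mul_bondOp_PY_two_mul {s : ℕ} (hs : 2 * s + 1 < L) :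
    psiTerm L s * bondOp L PY (2 * s) = -(bondOp L PY (2 * s) * psiTerm L s) := by
  refine prodOp_mul_prodOp_of_odd {⟨2 * s, by omega⟩} (fun i => ?_) (by simp)
  simp only [mem_singleton, Fin.ext_iff]
  split_ifs <;> first | omega | simp [PZ_mul_PY]

lemma psiTerm_commute_bondOp_PZ {k s : ℕ} (hk : k + 1 < L) (hs : 2 * s ≠ k + 1) :
    Commute (psiTerm L s) (bondOp L PZ k) := by
  rcases hs.lt_or_gt with h | h
  · refine commute_prodOp_of_even ∅ (fun i => ?_) (by simp)
    simp only [notMem_empty, if_false]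
    split_ifs <;> first | omega | simp
  · refine commute_prodOp_of_even {⟨k, by omega⟩, ⟨k + 1, hk⟩} (fun i => ?_)
      (by rw [card_pair (by simp [Fin.ext_iff])]; exact even_two)
    simp only [mem_insert, mem_singleton, Fin.ext_iff]
    split_ifs <;> first | omega | simp [PX_mul_PZ]

lemma psiTerm_succ_mul_bondOp_PZ_two_mul_add_one {s : ℕ} (hs : 2 * s + 2 < L) :
    psiTerm L (s + 1) * bondOp L PZ (2 * s + 1) =
      -(bondOp L PZ (2 * s + 1) * psiTerm L (s + 1)) := by
  refine prodOp_mul_prodOp_of_odd {⟨2 * s + 1, by omega⟩} (fun i => ?_) (by simp)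
  simp only [mem_singleton, Fin.ext_iff]
  split_ifs <;> first | omega | simp [PX_mul_PZ]

/-- Both sides are `-i X_0 ⋯ X_{2s} Y_{2s+1}`: their factors differ by the phases `d`, whose
product is `1`. -/
lemma psiTerm_mul_bondOp_PY_eq_psiTerm_succ_mul_bondOp_PZ {s : ℕ} (hs : 2 * s + 2 < L) :
    psiTerm L s * bondOp L PY (2 * s) = psiTerm L (s + 1) * bondOp L PZ (2 * s + 1) := by
  let d : Fin L → ℂ := fun i =>
    if (i : ℕ) = 2 * s then -Complex.I else if (i : ℕ) = 2 * s + 1 then Complex.I else 1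
  have hd : ∏ i, d i = 1 := by
    rw [Fintype.prod_eq_mul ⟨2 * s, by omega⟩ ⟨2 * s + 1, by omega⟩ (by simp [Fin.ext_iff])]
    · simp [d]
    · intro i hi
      simp only [ne_eq, Fin.ext_iff] at hi
      simp [d, hi]
  symm
  rw [psiTerm, psiTerm, bondOp, bondOp, prodOp_mul, prodOp_mul, ← one_smul ℂ (prodOp L _), ← hd,
    ← prodOp_smul]
  congr 1; funext i
  simp only [d]
  split_ifs <;>
    first | omega | simp [PZ_mul_PY_eq_smul_PX, PX_mul_PZ_eq_smul_PY, PZ_mul_PZ, smul_smul]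

lemma yzSZM_eq_sum (L : ℕ) (y : ℝ) :
    yzSZM L y = ∑ s ∈ range ((L + 1) / 2), (-(y : ℂ)) ^ s • psiTerm L s := rfl

lemma commute_yzSZM_of_forall_psiTerm {L : ℕ} (y : ℝ)
    {A : Matrix (Fin L → Fin 2) (Fin L → Fin 2) ℂ} (h : ∀ s, Commute (psiTerm L s) A) :
    Commute (yzSZM L y) A :=
  Commute.sum_left _ _ _ fun s _ => (h s).smul_left _

lemma psiTerm_commute_bondTerm {L k s : ℕ} (hk : k + 2 < L) (hs : 2 * s ≠ k)
    (hs' : 2 * s ≠ k + 2) (y : ℝ) :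
    Commute (psiTerm L s) ((y : ℂ) • bondOp L PY k + bondOp L PZ (k + 1)) :=
  ((psiTerm_commute_bondOp_PY (by omega) hs).smul_right _).add_right
    (psiTerm_commute_bondOp_PZ (by omega) hs')

lemma commute_psiTerm_pair_bondTerm {L t : ℕ} (ht : 2 * t + 2 < L) (y : ℝ) :
    Commute ((-(y : ℂ)) ^ t • psiTerm L t + (-(y : ℂ)) ^ (t + 1) • psiTerm L (t + 1))
      ((y : ℂ) • bondOp L PY (2 * t) + bondOp L PZ (2 * t + 1)) := by
  have hYY : psiTerm L t * bondOp L PY (2 * t) = -(bondOp L PY (2 * t) * psiTerm L t) :=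
    psiTerm_mul_bondOp_PY_two_mul (by omega)
  have hZZ : psiTerm L (t + 1) * bondOp L PZ (2 * t + 1) =
      -(bondOp L PZ (2 * t + 1) * psiTerm L (t + 1)) :=
    psiTerm_succ_mul_bondOp_PZ_two_mul_add_one ht
  have hZ : Commute (psiTerm L t) (bondOp L PZ (2 * t + 1)) :=
    psiTerm_commute_bondOp_PZ ht (by omega)
  have hY : Commute (psiTerm L (t + 1)) (bondOp L PY (2 * t)) :=
    psiTerm_commute_bondOp_PY (by omega) (by omega)
  simp only [Commute, SemiconjBy, add_mul, mul_add, smul_mul_assoc, mul_smul_comm]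
  rw [← hZ.eq, ← hY.eq, (neg_eq_iff_eq_neg.mpr hYY).symm, (neg_eq_iff_eq_neg.mpr hZZ).symm,
    ← psiTerm_mul_bondOp_PY_eq_psiTerm_succ_mul_bondOp_PZ ht]
  module

lemma commute_yzSZM_bondTerm {L j : ℕ} (hj : j + 2 < L) (y : ℝ) :
    Commute (yzSZM L y) ((y : ℂ) • bondOp L PY j + bondOp L PZ (j + 1)) := by
  obtain ⟨t, rfl | rfl⟩ := j.even_or_odd'
  · have hpair : {t, t + 1} ⊆ range ((L + 1) / 2) := by
      intro s hs
      simp only [mem_insert, mem_singleton] at hs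
      simp only [mem_range]
      omega
    rw [yzSZM_eq_sum, ← sum_sdiff hpair, sum_pair (by omega)]
    refine (Commute.sum_left _ _ _ fun s hs => ?_).add_left (commute_psiTerm_pair_bondTerm hj y)
    simp only [mem_sdiff, mem_insert, mem_singleton] at hs
    exact (psiTerm_commute_bondTerm hj (by omega) (by omega) y).smul_left _
  · exact commute_yzSZM_of_forall_psiTerm y fun s =>
      psiTerm_commute_bondTerm hj (by omega) (by omega) y

end chain

/-- `Ψ(y)` commutes with `Z₁ Z₂` and with every term
`y Y_j Y_{j+1} + Z_{j+1} Z_{j+2}` for `1 ≤ j ≤ L-2` (0-indexed below). -/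
theorem yz_szm_commutes (L : ℕ) (hL : 2 ≤ L) (y : ℝ) :
    (yzSZM L y * (onSite L PZ ⟨0, by omega⟩ * onSite L PZ ⟨1, by omega⟩) =
        (onSite L PZ ⟨0, by omega⟩ * onSite L PZ ⟨1, by omega⟩) * yzSZM L y) ∧
      ∀ (j : ℕ) (hj : j + 2 < L),
        yzSZM L y *
            ((y : ℂ) • (onSite L PY ⟨j, by omega⟩ * onSite L PY ⟨j + 1, by omega⟩) +
              onSite L PZ ⟨j + 1, by omega⟩ * onSite L PZ ⟨j + 2, by omega⟩) =
          ((y : ℂ) • (onSite L PY ⟨j, by omega⟩ * onSite L PY ⟨j + 1, by omega⟩) +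
              onSite L PZ ⟨j + 1, by omega⟩ * onSite L PZ ⟨j + 2, by omega⟩) *
            yzSZM L y := by
  constructor
  · have h := commute_yzSZM_of_forall_psiTerm y fun s =>
      psiTerm_commute_bondOp_PZ (L := L) (k := 0) (s := s) (by omega) (by omega)
    rw [← onSite_mul_onSite_succ PZ 0 (by omega)] at h
    exact h.eq
  · intro j hj
    have h := commute_yzSZM_bondTerm hj y
    rw [← onSite_mul_onSite_succ PY j (by omega), ← onSite_mul_onSite_succ PZ (j + 1) hj] at h
    exact h.eq
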